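/- The functional H̄ is everywhere Gâteaux differentiable on H²_T: for any ν, ω ∈ H²_T, writing r^ω_t = ∫₀^t ω_u du, the limit lim_{ε→0} (H̄(ν + εω) − H̄(ν))/ε exists and equals E[∫₀^T ( r^ω_t (Â_t + λ ν̄_t) − 2( a ν_t ω_t + Ψ(ν_t r^ω_t + ω_t q^ν_t) + φ q^ν_t r^ω_t ) ) dt ]. -/

import Mathlib

/-!
Since `q^{ν+εω} = q^ν + ε r^ω` wherever the paths of `ν` and `ω` are integrable (for `P`-a.e.
sample), the integrand of `H̄(ν + εω)` is a quadratic polynomial in `ε`. Its coefficients are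
products of processes in `L²(P ⊗ dt)` on `Ω × [0, T]`; for the running integral `r^ω` this is
Cauchy–Schwarz, `(∫₀ᵗ ω)² ≤ T ∫₀ᵀ ω²`. Hence they are integrable, Fubini applies, and
`H̄(ν + εω) = H̄(ν) + ε D + ε² K` exactly, with `D` the claimed derivative, so the difference
quotient `D + ε K` tends to `D`.
-/

open MeasureTheory Set Filter
open scoped ENNReal Topology

/-- The controlled inventory process `q^ν_t = Q₀ + ∫₀ᵗ ν_u du`. -/
noncomputable def inventory {Ω : Type*} (Q0 : Ω → ℝ) (ν : ℝ → Ω → ℝ) (t : ℝ) (ω : Ω) : ℝ :=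
  Q0 ω + ∫ u in (0 : ℝ)..t, ν u ω

/-- The objective functional
`H̄(ν) = E[∫₀ᵀ ( q^ν_t (Â_t + λ ν̄_t) − a ν_t² − 2Ψ ν_t q^ν_t − φ (q^ν_t)² ) dt]`. -/
noncomputable def Hbar {Ω : Type*} [MeasurableSpace Ω] (P : Measure Ω) (T : ℝ)
    (Ahat nubar : ℝ → Ω → ℝ) (l a φ Ψ : ℝ) (Q0 : Ω → ℝ) (ν : ℝ → Ω → ℝ) : ℝ :=
  ∫ ω, (∫ t in Icc (0 : ℝ) T,
      (inventory Q0 ν t ω * (Ahat t ω + l * nubar t ω) - a * (ν t ω) ^ 2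
        - 2 * Ψ * ν t ω * inventory Q0 ν t ω - φ * (inventory Q0 ν t ω) ^ 2)) ∂P

theorem tendsto_slope_of_eq_quadratic {F : ℝ → ℝ} {A B C : ℝ}
    (hF : ∀ ε, F ε = A + ε * B + ε ^ 2 * C) :
    Tendsto (fun ε => (F ε - A) / ε) (𝓝[≠] 0) (𝓝 B) := by
  have hslope : (fun ε => B + ε * C) =ᶠ[𝓝[≠] 0] fun ε => (F ε - A) / ε := by
    filter_upwards [self_mem_nhdsWithin] with ε (hε : ε ≠ 0)
    rw [hF]
    field_simp
    ring
  refine Tendsto.congr' hslope (tendsto_nhdsWithin_of_tendsto_nhds ?_)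
  simpa using ((continuous_mul_const C).const_add B).tendsto (0 : ℝ)

section

variable {α β : Type*} [MeasurableSpace α] [MeasurableSpace β] {μ : Measure α} {ν : Measure β}

theorem memLp_two_prod_iff_lintegral_sq [SFinite ν] {f : α × β → ℝ}
    (hf : AEStronglyMeasurable f (μ.prod ν)) :
    MemLp f 2 (μ.prod ν) ↔ ∫⁻ x, ∫⁻ y, ENNReal.ofReal (f (x, y) ^ 2) ∂ν ∂μ < ⊤ := by
  rw [memLp_two_iff_integrable_sq hf, Integrable, hasFiniteIntegral_iff_ofReal
    (.of_forall fun _ => sq_nonneg _),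
    ← lintegral_prod _ (hf.aemeasurable.pow_const 2).ennreal_ofReal]
  exact and_iff_right (hf.pow 2)

theorem sq_lintegral_le_measure_univ_mul_lintegral_sq {f : α → ℝ≥0∞} (hf : AEMeasurable f μ) :
    (∫⁻ x, f x ∂μ) ^ 2 ≤ μ univ * ∫⁻ x, f x ^ 2 ∂μ := by
  have h := ENNReal.lintegral_mul_norm_pow_le (hf.pow_const 2) (aemeasurable_const (b := 1))
    (p := 1 / 2) (q := 1 / 2) (by norm_num) (by norm_num) (by norm_num)
  simp only [ENNReal.one_rpow, mul_one, lintegral_const, one_mul] at h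
  have hsqrt : ∀ x : ℝ≥0∞, (x ^ 2) ^ (1 / 2 : ℝ) = x := fun x => by
    rw [← ENNReal.rpow_natCast, ← ENNReal.rpow_mul]; norm_num
  simp only [hsqrt] at h
  calc (∫⁻ x, f x ∂μ) ^ 2 ≤ ((∫⁻ x, f x ^ 2 ∂μ) ^ (1 / 2 : ℝ) * μ univ ^ (1 / 2 : ℝ)) ^ 2 := by
        gcongr
    _ = μ univ * ∫⁻ x, f x ^ 2 ∂μ := by
        rw [mul_pow, ← ENNReal.rpow_natCast, ← ENNReal.rpow_natCast, ← ENNReal.rpow_mul,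
          ← ENNReal.rpow_mul]
        norm_num [mul_comm]

theorem integral_integral_add_mul_add_sq_mul [SFinite μ] [SFinite ν] {f g h : α → β → ℝ}
    (hf : Integrable (Function.uncurry f) (μ.prod ν))
    (hg : Integrable (Function.uncurry g) (μ.prod ν))
    (hh : Integrable (Function.uncurry h) (μ.prod ν)) (ε : ℝ) :
    ∫ x, ∫ y, (f x y + ε * g x y + ε ^ 2 * h x y) ∂ν ∂μ
      = (∫ x, ∫ y, f x y ∂ν ∂μ) + ε * (∫ x, ∫ y, g x y ∂ν ∂μ)
        + ε ^ 2 * ∫ x, ∫ y, h x y ∂ν ∂μ := by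
  have hfg := hf.add (hg.const_mul ε)
  rw [integral_integral hf, integral_integral hg, integral_integral hh,
    integral_integral (hfg.add (hh.const_mul (ε ^ 2))),
    integral_add (by exact hfg) (by exact hh.const_mul _),
    integral_add (by exact hf) (by exact hg.const_mul _), integral_const_mul, integral_const_mul]
end

theorem measurable_setIntegral_Ioc {γ : Type*} [MeasurableSpace γ] {g : γ → ℝ → ℝ}
    (hg : Measurable (Function.uncurry g)) {a b : γ → ℝ} (ha : Measurable a) (hb : Measurable b) :
    Measurable fun x => ∫ u in Ioc (a x) (b x), g x u := by
  simp_rw [← integral_indicator measurableSet_Ioc]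
  refine (StronglyMeasurable.integral_prod_right' (f := fun p : γ × ℝ =>
    (Ioc (a p.1) (b p.1)).indicator (g p.1) p.2) ?_).measurable
  refine (Measurable.ite ?_ hg measurable_const).stronglyMeasurable
  exact (measurableSet_lt (ha.comp measurable_fst) measurable_snd).inter
    (measurableSet_le measurable_snd (hb.comp measurable_fst))

theorem measurable_intervalIntegral {γ : Type*} [MeasurableSpace γ] {g : γ → ℝ → ℝ}
    (hg : Measurable (Function.uncurry g)) {a b : γ → ℝ} (ha : Measurable a) (hb : Measurable b) :
    Measurable fun x => ∫ u in (a x)..(b x), g x u :=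
  (measurable_setIntegral_Ioc hg ha hb).sub (measurable_setIntegral_Ioc hg hb ha)

theorem ENNReal.ofReal_sq_eq_enorm_sq (x : ℝ) : ENNReal.ofReal (x ^ 2) = ‖x‖ₑ ^ 2 := by
  rw [Real.enorm_eq_ofReal_abs, ← ENNReal.ofReal_pow (abs_nonneg x), sq_abs]

section

variable {Ω : Type*} [MeasurableSpace Ω] {P : Measure Ω} {T : ℝ} {χ : ℝ → Ω → ℝ}

theorem memLp_two_prod_restrict_Icc (hχ : Measurable (Function.uncurry χ))
    (h2 : ∫⁻ ω, (∫⁻ t in Icc (0 : ℝ) T, ENNReal.ofReal ((χ t ω) ^ 2)) ∂P < ⊤) :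
    MemLp (fun z : Ω × ℝ => χ z.2 z.1) 2 (P.prod (volume.restrict (Icc (0 : ℝ) T))) :=
  (memLp_two_prod_iff_lintegral_sq (hχ.comp measurable_swap).aestronglyMeasurable).2 h2

theorem sq_intervalIntegral_le {f : ℝ → ℝ} (hf : Measurable f) {t : ℝ} (ht : t ∈ Icc (0 : ℝ) T) :
    ENNReal.ofReal ((∫ u in (0 : ℝ)..t, f u) ^ 2)
      ≤ ENNReal.ofReal T * ∫⁻ u in Icc (0 : ℝ) T, ENNReal.ofReal (f u ^ 2) := by
  have habs : ‖∫ u in (0 : ℝ)..t, f u‖ₑ ≤ ∫⁻ u in Icc (0 : ℝ) T, ‖f u‖ₑ := by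
    rw [intervalIntegral.integral_of_le ht.1]
    exact (enorm_integral_le_lintegral_enorm _).trans
      (lintegral_mono_set (Ioc_subset_Icc_self.trans (Icc_subset_Icc_right ht.2)))
  have hCS := sq_lintegral_le_measure_univ_mul_lintegral_sq
    (μ := volume.restrict (Icc (0 : ℝ) T)) hf.enorm.aemeasurable
  simp only [Measure.restrict_apply_univ, Real.volume_Icc, sub_zero] at hCS
  simp only [ENNReal.ofReal_sq_eq_enorm_sq]
  exact (pow_le_pow_left' habs 2).trans hCS

theorem memLp_two_prod_intervalIntegral (hχ : Measurable (Function.uncurry χ))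
    (h2 : ∫⁻ ω, (∫⁻ t in Icc (0 : ℝ) T, ENNReal.ofReal ((χ t ω) ^ 2)) ∂P < ⊤) :
    MemLp (fun z : Ω × ℝ => ∫ u in (0 : ℝ)..z.2, χ u z.1) 2
      (P.prod (volume.restrict (Icc (0 : ℝ) T))) := by
  have hmeas : Measurable fun z : Ω × ℝ => ∫ u in (0 : ℝ)..z.2, χ u z.1 :=
    measurable_intervalIntegral (g := fun (z : Ω × ℝ) u => χ u z.1)
      (hχ.comp (measurable_snd.prodMk measurable_fst.fst)) measurable_const measurable_snd
  rw [memLp_two_prod_iff_lintegral_sq hmeas.aestronglyMeasurable]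
  calc ∫⁻ ω, (∫⁻ t in Icc (0 : ℝ) T, ENNReal.ofReal ((∫ u in (0 : ℝ)..t, χ u ω) ^ 2)) ∂P
      ≤ ∫⁻ ω, (∫⁻ _ in Icc (0 : ℝ) T,
          ENNReal.ofReal T * ∫⁻ u in Icc (0 : ℝ) T, ENNReal.ofReal (χ u ω ^ 2)) ∂P :=
        lintegral_mono fun ω => setLIntegral_mono' measurableSet_Icc fun t ht =>
          sq_intervalIntegral_le (hχ.comp (measurable_id.prodMk measurable_const)) ht
    _ = ENNReal.ofReal T * ENNReal.ofReal T *
          ∫⁻ ω, (∫⁻ u in Icc (0 : ℝ) T, ENNReal.ofReal (χ u ω ^ 2)) ∂P := by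
        simp only [setLIntegral_const, Real.volume_Icc, sub_zero]
        rw [mul_assoc, ← lintegral_const_mul' _ _ ENNReal.ofReal_ne_top,
          ← lintegral_const_mul' _ _ ENNReal.ofReal_ne_top]
        exact lintegral_congr fun ω => by ring
    _ < ⊤ := ENNReal.mul_lt_top
        (ENNReal.mul_lt_top ENNReal.ofReal_lt_top ENNReal.ofReal_lt_top) h2
end

theorem inventory_add_const_mul {Ω : Type*} {Q0 : Ω → ℝ} {ν w : ℝ → Ω → ℝ} {t : ℝ} {ω : Ω}
    (hν : IntervalIntegrable (fun u => ν u ω) volume 0 t)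
    (hw : IntervalIntegrable (fun u => w u ω) volume 0 t) (ε : ℝ) :
    inventory Q0 (fun t ω => ν t ω + ε * w t ω) t ω
      = inventory Q0 ν t ω + ε * ∫ u in (0 : ℝ)..t, w u ω := by
  simp only [inventory]
  rw [intervalIntegral.integral_add hν (hw.const_mul ε), intervalIntegral.integral_const_mul]
  ring

section

variable {Ω : Type*} [MeasurableSpace Ω] {P : Measure Ω} {T : ℝ}

theorem ae_intervalIntegrable_of_memLp_prod [IsFiniteMeasure P] {χ : ℝ → Ω → ℝ}
    (hχ : MemLp (fun z : Ω × ℝ => χ z.2 z.1) 2 (P.prod (volume.restrict (Icc (0 : ℝ) T)))) :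
    ∀ᵐ ω ∂P, ∀ t ∈ Icc (0 : ℝ) T, IntervalIntegrable (fun u => χ u ω) volume 0 t := by
  filter_upwards [(hχ.integrable one_le_two).prod_right_ae] with ω hω t ht
  exact (IntegrableOn.mono_set hω
    (uIcc_subset_Icc (left_mem_Icc.2 (ht.1.trans ht.2)) ht)).intervalIntegrable

theorem Hbar_add_const_mul [SFinite P] {Ahat nubar : ℝ → Ω → ℝ} {l a φ Ψ : ℝ} {Q0 : Ω → ℝ}
    {ν w : ℝ → Ω → ℝ}
    (hA : MemLp (fun z : Ω × ℝ => Ahat z.2 z.1 + l * nubar z.2 z.1) 2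
      (P.prod (volume.restrict (Icc (0 : ℝ) T))))
    (hν : MemLp (fun z : Ω × ℝ => ν z.2 z.1) 2 (P.prod (volume.restrict (Icc (0 : ℝ) T))))
    (hw : MemLp (fun z : Ω × ℝ => w z.2 z.1) 2 (P.prod (volume.restrict (Icc (0 : ℝ) T))))
    (hq : MemLp (fun z : Ω × ℝ => inventory Q0 ν z.2 z.1) 2
      (P.prod (volume.restrict (Icc (0 : ℝ) T))))
    (hr : MemLp (fun z : Ω × ℝ => ∫ u in (0 : ℝ)..z.2, w u z.1) 2
      (P.prod (volume.restrict (Icc (0 : ℝ) T))))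
    (hlin : ∀ᵐ ω ∂P, ∀ t ∈ Icc (0 : ℝ) T, ∀ ε : ℝ,
      inventory Q0 (fun t ω => ν t ω + ε * w t ω) t ω
        = inventory Q0 ν t ω + ε * ∫ u in (0 : ℝ)..t, w u ω) (ε : ℝ) :
    Hbar P T Ahat nubar l a φ Ψ Q0 (fun t ω => ν t ω + ε * w t ω)
      = Hbar P T Ahat nubar l a φ Ψ Q0 ν
        + ε * (∫ ω, (∫ t in Icc (0 : ℝ) T,
          ((∫ u in (0 : ℝ)..t, w u ω) * (Ahat t ω + l * nubar t ω)
            - 2 * (a * ν t ω * w t ω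
              + Ψ * (ν t ω * (∫ u in (0 : ℝ)..t, w u ω) + w t ω * inventory Q0 ν t ω)
              + φ * inventory Q0 ν t ω * (∫ u in (0 : ℝ)..t, w u ω)))) ∂P)
        + ε ^ 2 * ∫ ω, (∫ t in Icc (0 : ℝ) T,
          (-(a * w t ω ^ 2) - 2 * Ψ * w t ω * (∫ u in (0 : ℝ)..t, w u ω)
            - φ * (∫ u in (0 : ℝ)..t, w u ω) ^ 2)) ∂P := by
  have hF : Integrable (Function.uncurry fun ω t =>
      inventory Q0 ν t ω * (Ahat t ω + l * nubar t ω) - a * (ν t ω) ^ 2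
        - 2 * Ψ * ν t ω * inventory Q0 ν t ω - φ * (inventory Q0 ν t ω) ^ 2)
      (P.prod (volume.restrict (Icc (0 : ℝ) T))) := by
    refine ((((hq.integrable_mul hA).sub (hν.integrable_sq.const_mul a)).sub
      ((hν.integrable_mul hq).const_mul (2 * Ψ))).sub (hq.integrable_sq.const_mul φ)).congr
      (.of_forall fun z => ?_)
    simp only [Pi.sub_apply, Pi.mul_apply, Function.uncurry]
    ring
  have hG : Integrable (Function.uncurry fun ω t =>
      (∫ u in (0 : ℝ)..t, w u ω) * (Ahat t ω + l * nubar t ω)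
        - 2 * (a * ν t ω * w t ω
          + Ψ * (ν t ω * (∫ u in (0 : ℝ)..t, w u ω) + w t ω * inventory Q0 ν t ω)
          + φ * inventory Q0 ν t ω * (∫ u in (0 : ℝ)..t, w u ω)))
      (P.prod (volume.restrict (Icc (0 : ℝ) T))) := by
    refine ((hr.integrable_mul hA).sub (((((hν.integrable_mul hw).const_mul a).add
      (((hν.integrable_mul hr).add (hw.integrable_mul hq)).const_mul Ψ)).add
      ((hq.integrable_mul hr).const_mul φ)).const_mul 2)).congr (.of_forall fun z => ?_)
    simp only [Pi.sub_apply, Pi.add_apply, Pi.mul_apply, Function.uncurry]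
    ring
  have hK : Integrable (Function.uncurry fun ω t =>
      -(a * w t ω ^ 2) - 2 * Ψ * w t ω * (∫ u in (0 : ℝ)..t, w u ω)
        - φ * (∫ u in (0 : ℝ)..t, w u ω) ^ 2)
      (P.prod (volume.restrict (Icc (0 : ℝ) T))) := by
    refine (((hw.integrable_sq.const_mul a).neg.sub
      ((hw.integrable_mul hr).const_mul (2 * Ψ))).sub (hr.integrable_sq.const_mul φ)).congr
      (.of_forall fun z => ?_)
    simp only [Pi.sub_apply, Pi.neg_apply, Pi.mul_apply, Function.uncurry]
    ring
  refine (integral_congr_ae ?_).trans (integral_integral_add_mul_add_sq_mul hF hG hK ε)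
  filter_upwards [hlin] with ω hω
  refine setIntegral_congr_fun measurableSet_Icc fun t ht => ?_
  simp only [hω t ht ε]
  ring
end

theorem stmt_4_general {Ω : Type*} {m0 : MeasurableSpace Ω} (P : Measure Ω) [IsProbabilityMeasure P]
    (T : ℝ)
    (Ahat nubar : ℝ → Ω → ℝ)
    (hAhatmeas : Measurable (Function.uncurry Ahat))
    (hnubarmeas : Measurable (Function.uncurry nubar))
    (hAhat2 : (∫⁻ ω, (∫⁻ t in Icc (0 : ℝ) T, ENNReal.ofReal ((Ahat t ω) ^ 2)) ∂P) < ⊤)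
    (hnubar2 : (∫⁻ ω, (∫⁻ t in Icc (0 : ℝ) T, ENNReal.ofReal ((nubar t ω) ^ 2)) ∂P) < ⊤)
    (l a φ Ψ : ℝ)
    (Q0 : Ω → ℝ) (hQ0 : MemLp Q0 2 P)
    (ν w : ℝ → Ω → ℝ)
    (hνmeas : Measurable (Function.uncurry ν))
    (hwmeas : Measurable (Function.uncurry w))
    (hν2 : (∫⁻ ω, (∫⁻ t in Icc (0 : ℝ) T, ENNReal.ofReal ((ν t ω) ^ 2)) ∂P) < ⊤)
    (hw2 : (∫⁻ ω, (∫⁻ t in Icc (0 : ℝ) T, ENNReal.ofReal ((w t ω) ^ 2)) ∂P) < ⊤) :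
    Tendsto
      (fun ε : ℝ =>
        (Hbar P T Ahat nubar l a φ Ψ Q0 (fun t ω => ν t ω + ε * w t ω)
            - Hbar P T Ahat nubar l a φ Ψ Q0 ν) / ε)
      (𝓝[≠] (0 : ℝ))
      (𝓝 (∫ ω, (∫ t in Icc (0 : ℝ) T,
        ((∫ u in (0 : ℝ)..t, w u ω) * (Ahat t ω + l * nubar t ω)
          - 2 * (a * ν t ω * w t ω
            + Ψ * (ν t ω * (∫ u in (0 : ℝ)..t, w u ω) + w t ω * inventory Q0 ν t ω)
            + φ * inventory Q0 ν t ω * (∫ u in (0 : ℝ)..t, w u ω)))) ∂P)) := by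
  have hν := memLp_two_prod_restrict_Icc hνmeas hν2
  have hw := memLp_two_prod_restrict_Icc hwmeas hw2
  have hA := (memLp_two_prod_restrict_Icc hAhatmeas hAhat2).add
    ((memLp_two_prod_restrict_Icc hnubarmeas hnubar2).const_mul l)
  have hq : MemLp (fun z : Ω × ℝ => inventory Q0 ν z.2 z.1) 2
      (P.prod (volume.restrict (Icc (0 : ℝ) T))) :=
    (hQ0.comp_fst _).add (memLp_two_prod_intervalIntegral hνmeas hν2)
  have hlin : ∀ᵐ ω ∂P, ∀ t ∈ Icc (0 : ℝ) T, ∀ ε : ℝ,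
      inventory Q0 (fun t ω => ν t ω + ε * w t ω) t ω
        = inventory Q0 ν t ω + ε * ∫ u in (0 : ℝ)..t, w u ω := by
    filter_upwards [ae_intervalIntegrable_of_memLp_prod hν, ae_intervalIntegrable_of_memLp_prod hw]
      with ω hνω hwω t ht ε using inventory_add_const_mul (hνω t ht) (hwω t ht) ε
  exact tendsto_slope_of_eq_quadratic
    (Hbar_add_const_mul hA hν hw hq (memLp_two_prod_intervalIntegral hwmeas hw2) hlin)

/-- `H̄` is everywhere Gâteaux differentiable on `H²_T`: for `ν, ω ∈ H²_T`,
with `r^ω_t = ∫₀ᵗ ω_u du`, the limit of `(H̄(ν + εω) − H̄(ν))/ε` as `ε → 0` exists and equals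
`E[∫₀ᵀ ( r^ω_t (Â_t + λν̄_t) − 2(a ν_t ω_t + Ψ(ν_t r^ω_t + ω_t q^ν_t) + φ q^ν_t r^ω_t) ) dt]`. -/
theorem stmt_4 {Ω : Type*} {m0 : MeasurableSpace Ω} (P : Measure Ω) [IsProbabilityMeasure P]
    (T : ℝ) (hT : 0 < T)
    (Ahat nubar : ℝ → Ω → ℝ)
    (hAhatmeas : Measurable (Function.uncurry Ahat))
    (hnubarmeas : Measurable (Function.uncurry nubar))
    (hAhat2 : (∫⁻ ω, (∫⁻ t in Icc (0 : ℝ) T, ENNReal.ofReal ((Ahat t ω) ^ 2)) ∂P) < ⊤)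
    (hnubar2 : (∫⁻ ω, (∫⁻ t in Icc (0 : ℝ) T, ENNReal.ofReal ((nubar t ω) ^ 2)) ∂P) < ⊤)
    (l a φ Ψ : ℝ) (ha : 0 < a) (hφ : 0 ≤ φ) (hΨ : 0 < Ψ)
    (Q0 : Ω → ℝ) (hQ0 : MemLp Q0 2 P)
    (ν w : ℝ → Ω → ℝ)
    (hνmeas : Measurable (Function.uncurry ν))
    (hwmeas : Measurable (Function.uncurry w))
    (hν2 : (∫⁻ ω, (∫⁻ t in Icc (0 : ℝ) T, ENNReal.ofReal ((ν t ω) ^ 2)) ∂P) < ⊤)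
    (hw2 : (∫⁻ ω, (∫⁻ t in Icc (0 : ℝ) T, ENNReal.ofReal ((w t ω) ^ 2)) ∂P) < ⊤) :
    Tendsto
      (fun ε : ℝ =>
        (Hbar P T Ahat nubar l a φ Ψ Q0 (fun t ω => ν t ω + ε * w t ω)
            - Hbar P T Ahat nubar l a φ Ψ Q0 ν) / ε)
      (𝓝[≠] (0 : ℝ))
      (𝓝 (∫ ω, (∫ t in Icc (0 : ℝ) T,
        ((∫ u in (0 : ℝ)..t, w u ω) * (Ahat t ω + l * nubar t ω)
          - 2 * (a * ν t ω * w t ω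
            + Ψ * (ν t ω * (∫ u in (0 : ℝ)..t, w u ω) + w t ω * inventory Q0 ν t ω)
            + φ * inventory Q0 ν t ω * (∫ u in (0 : ℝ)..t, w u ω)))) ∂P)) :=
  stmt_4_general (m0 := m0) P T Ahat nubar hAhatmeas hnubarmeas hAhat2 hnubar2 l a φ Ψ Q0 hQ0 ν w
    hνmeas hwmeas hν2 hw2
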